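/- arXiv:2307.07583 — 3 statements merged into one kernel-verified Lean document; each statement's English description precedes it below -/
import Mathlib

section
/- In the graph G′ constructed below: if a node a ∈ V_1 lies on a k-cycle in G, then rtd(a, a′) ≤ 6t + 2k, where a ∈ S and a′ ∈ T are the two copies of a in G′. -/
open scoped ENNReal

/-- Total weight of the walk that starts at `u` and then visits the vertices of `l` in
order.  Non-edges have weight `⊤`. -/
noncomputable def walkWeight {V : Type*} (w : V → V → ℝ≥0∞) : V → List V → ℝ≥0∞
  | _, [] => 0
  | u, x :: xs => w u x + walkWeight w x xs

/-- Shortest-path distance induced by the weight function `w` (`⊤` if there is no path). -/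
noncomputable def netDist {V : Type*} (w : V → V → ℝ≥0∞) (u v : V) : ℝ≥0∞ :=
  ⨅ (l : List V) (_ : (u :: l).getLast (List.cons_ne_nil u l) = v), walkWeight w u l

/-- Vertices of the graph `G'`: `A₁` will be `V₁` (for the two copies `S` and `T`),
`A₂` will be `V₂ ∪ ⋯ ∪ V_k` (for the two copies `fwd` and `bwd`), `gj` is the bit gadget
`J = {g_1, …, g_d}`, and `o1, …, o4` are the four omni-nodes. -/
inductive GVert (A₁ A₂ : Type) (d : ℕ) : Type
  | vS : A₁ → GVert A₁ A₂ d
  | vT : A₁ → GVert A₁ A₂ d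
  | fwd : A₂ → GVert A₁ A₂ d
  | bwd : A₂ → GVert A₁ A₂ d
  | gj : Fin d → GVert A₁ A₂ d
  | o1 : GVert A₁ A₂ d
  | o2 : GVert A₁ A₂ d
  | o3 : GVert A₁ A₂ d
  | o4 : GVert A₁ A₂ d

open Classical in
/-- Edge weights of `G'` (non-edges have weight `⊤`).  Here `part : A → ZMod k` gives the
part `V_{i+1}` of each vertex `i` of `G` (so `V₁ = {a | part a = 0}`), `E` is the edge
relation of `G`, `t` is the weight scale and `ident a` is the identifier `ā ∈ {0,1}^d`. -/
noncomputable def gw {A : Type} (k : ℕ) (part : A → ZMod k) (E : A → A → Prop)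
    (d t : ℕ) (ident : A → Fin d → Bool) :
    GVert {a : A // part a = 0} {x : A // part x ≠ 0} d →
      GVert {a : A // part a = 0} {x : A // part x ≠ 0} d → ℝ≥0∞
  -- edges of G inside V₂ ∪ ⋯ ∪ V_k, copied forwards and backwards
  | .fwd x, .fwd y => if E x.1 y.1 then 1 else ⊤
  | .bwd y, .bwd x => if E x.1 y.1 then 1 else ⊤
  -- edges of G leaving V₁
  | .vS a, .fwd x => if E a.1 x.1 then ((3 * t + 1 : ℕ) : ℝ≥0∞) else ⊤
  | .bwd x, .vS a => if E a.1 x.1 then 1 else ⊤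
  -- edges of G entering V₁
  | .fwd x, .vT a => if E x.1 a.1 then ((3 * t + 1 : ℕ) : ℝ≥0∞) else ⊤
  | .vT a, .bwd x => if E x.1 a.1 then 1 else ⊤
  -- omni-nodes to/from the fwd and bwd copies
  | .o1, .fwd _ => 1
  | .fwd _, .o2 => 1
  | .o3, .bwd _ => 1
  | .bwd _, .o4 => 1
  -- S to/from omni-nodes
  | .vS _, .o1 => ((5 * t + 1 : ℕ) : ℝ≥0∞)
  | .o2, .vS _ => ((t + 1 : ℕ) : ℝ≥0∞)
  | .vS _, .o3 => ((4 * t + 1 : ℕ) : ℝ≥0∞)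
  | .o4, .vS _ => ((2 * t + 1 : ℕ) : ℝ≥0∞)
  -- T to/from omni-nodes
  | .vT _, .o1 => ((t + 1 : ℕ) : ℝ≥0∞)
  | .o2, .vT _ => ((5 * t + 1 : ℕ) : ℝ≥0∞)
  | .vT _, .o3 => ((2 * t + 1 : ℕ) : ℝ≥0∞)
  | .o4, .vT _ => ((4 * t + 1 : ℕ) : ℝ≥0∞)
  -- weight-3t edges between distinct omni-nodes
  | .o1, .o2 => ((3 * t : ℕ) : ℝ≥0∞)
  | .o1, .o3 => ((3 * t : ℕ) : ℝ≥0∞)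
  | .o1, .o4 => ((3 * t : ℕ) : ℝ≥0∞)
  | .o2, .o1 => ((3 * t : ℕ) : ℝ≥0∞)
  | .o2, .o3 => ((3 * t : ℕ) : ℝ≥0∞)
  | .o2, .o4 => ((3 * t : ℕ) : ℝ≥0∞)
  | .o3, .o1 => ((3 * t : ℕ) : ℝ≥0∞)
  | .o3, .o2 => ((3 * t : ℕ) : ℝ≥0∞)
  | .o3, .o4 => ((3 * t : ℕ) : ℝ≥0∞)
  | .o4, .o1 => ((3 * t : ℕ) : ℝ≥0∞)
  | .o4, .o2 => ((3 * t : ℕ) : ℝ≥0∞)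
  | .o4, .o3 => ((3 * t : ℕ) : ℝ≥0∞)
  -- the bit gadget: S to/from J
  | .vS a, .gj j => if ident a.1 j then ((3 * t + 1 : ℕ) : ℝ≥0∞) else ((5 * t + 1 : ℕ) : ℝ≥0∞)
  | .gj j, .vS a => if ident a.1 j then ((2 * t + 1 : ℕ) : ℝ≥0∞) else 1
  -- the bit gadget: T to/from J
  | .gj j, .vT a => if ident a.1 j then ((5 * t + 1 : ℕ) : ℝ≥0∞) else ((3 * t + 1 : ℕ) : ℝ≥0∞)
  | .vT a, .gj j => if ident a.1 j then 1 else ((2 * t + 1 : ℕ) : ℝ≥0∞)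
  -- weight-(3t+1) edges between J and the omni-nodes, in both directions
  | .gj _, .o1 => ((3 * t + 1 : ℕ) : ℝ≥0∞)
  | .gj _, .o2 => ((3 * t + 1 : ℕ) : ℝ≥0∞)
  | .gj _, .o3 => ((3 * t + 1 : ℕ) : ℝ≥0∞)
  | .gj _, .o4 => ((3 * t + 1 : ℕ) : ℝ≥0∞)
  | .o1, .gj _ => ((3 * t + 1 : ℕ) : ℝ≥0∞)
  | .o2, .gj _ => ((3 * t + 1 : ℕ) : ℝ≥0∞)
  | .o3, .gj _ => ((3 * t + 1 : ℕ) : ℝ≥0∞)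
  | .o4, .gj _ => ((3 * t + 1 : ℕ) : ℝ≥0∞)
  -- all remaining pairs: no edge
  | _, _ => ⊤

/-- `a ∈ V₁` lies on a `k`-cycle of `G`: there are `x₂ ∈ V₂, …, x_k ∈ V_k` with
`(a,x₂), (x₂,x₃), …, (x_{k-1},x_k), (x_k,a)` all edges of `G`. -/
def liesOnKCycle {A : Type} (E : A → A → Prop) (k : ℕ) (a : A) : Prop :=
  ∃ x : ℕ → A, x 0 = a ∧ (∀ i, i < k - 1 → E (x i) (x (i + 1))) ∧ E (x (k - 1)) a


lemma netDist_le_weight {V : Type*} (w : V → V → ℝ≥0∞) (u v : V) :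
    netDist w u v ≤ w u v := by
  have h : netDist w u v ≤ walkWeight w u [v] := iInf₂_le [v] (by simp)
  simpa [walkWeight] using h

lemma netDist_le_cons {V : Type*} (w : V → V → ℝ≥0∞) (u z v : V) :
    netDist w u v ≤ w u z + netDist w z v := by
  conv_rhs => rw [netDist]
  rw [ENNReal.add_iInf]
  refine le_iInf fun l => ?_
  rw [ENNReal.add_iInf]
  refine le_iInf fun hl => ?_
  have h : netDist w u v ≤ walkWeight w u (z :: l) := by
    refine iInf₂_le (z :: l) ?_
    rw [List.getLast_cons (List.cons_ne_nil z l)]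
    exact hl
  simpa [walkWeight] using h

/-- If `a ∈ V₁` lies on a `k`-cycle of `G`, then the two copies
`a ∈ S` and `a′ ∈ T` have roundtrip distance at most `6t + 2k` in `G′`. -/
theorem stmt_11 {A : Type} (k t : ℕ) (hk : 3 ≤ k) (ht : 2 * k < t)
    (part : A → ZMod k) (E : A → A → Prop)
    (hE : ∀ u v : A, E u v → part v = part u + 1)
    (d : ℕ) (ident : A → Fin d → Bool)
    (hid₁ : ∀ a b : A, part a = 0 → part b = 0 → a ≠ b →
      (∃ i : Fin d, ident a i = true ∧ ident b i = false) ∧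
      (∃ j : Fin d, ident a j = false ∧ ident b j = true))
    (hid₂ : ∀ a b : A, part a = 0 → part b = 0 →
      (∃ i : Fin d, ident a i = true ∧ ident b i = true) ∧
      (∃ j : Fin d, ident a j = false ∧ ident b j = false))
    (a : A) (ha : part a = 0) (hcyc : liesOnKCycle E k a) :
    netDist (gw k part E d t ident) (GVert.vS ⟨a, ha⟩) (GVert.vT ⟨a, ha⟩) +
        netDist (gw k part E d t ident) (GVert.vT ⟨a, ha⟩) (GVert.vS ⟨a, ha⟩) ≤
      ((6 * t + 2 * k : ℕ) : ℝ≥0∞) := by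
  classical
  obtain ⟨x, hx0, hstep, hlast⟩ := hcyc
  haveI : NeZero k := ⟨by omega⟩
  set w := gw k part E d t ident with hw
  have hpart : ∀ i, i ≤ k - 1 → part (x i) = (i : ZMod k) := by
    intro i
    induction i with
    | zero => intro _; rw [hx0, ha]; simp
    | succ n ih =>
      intro h
      have h2 : part (x (n + 1)) = part (x n) + 1 := hE _ _ (hstep n (by omega))
      rw [h2, ih (by omega)]
      push_cast
      ring
  have hne : ∀ i, 1 ≤ i → i ≤ k - 1 → part (x i) ≠ 0 := by
    intro i h1 h2 h
    rw [hpart i h2] at h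
    have hdvd := (ZMod.natCast_eq_zero_iff i k).mp h
    have := Nat.le_of_dvd (by omega) hdvd
    omega
  have hne1 : part (x 1) ≠ 0 := hne 1 le_rfl (by omega)
  have hnek : part (x (k - 1)) ≠ 0 := hne (k - 1) (by omega) le_rfl
  have hEa : E a (x 1) := by rw [← hx0]; exact hstep 0 (by omega)
  -- forward walk
  have fwdClaim : ∀ j, j ≤ k - 2 → ∀ (hm : part (x (k - 1 - j)) ≠ 0),
      netDist w (GVert.fwd ⟨x (k - 1 - j), hm⟩) (GVert.vT ⟨a, ha⟩)
        ≤ ((3 * t + 1 + j : ℕ) : ℝ≥0∞) := by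
    intro j
    induction j with
    | zero =>
      intro _ hm
      have e : w (GVert.fwd ⟨x (k - 1 - 0), hm⟩) (GVert.vT ⟨a, ha⟩)
          = if E (x (k - 1 - 0)) a then ((3 * t + 1 : ℕ) : ℝ≥0∞) else ⊤ := rfl
      refine le_trans (netDist_le_weight w _ _) ?_
      rw [e]
      have hlast' : E (x (k - 1 - 0)) a := hlast
      rw [if_pos hlast']
    | succ n ih =>
      intro h hm
      have hm1 : (k - 1 - (n + 1)) + 1 = k - 1 - n := by omega
      have hne' : part (x (k - 1 - n)) ≠ 0 := hne _ (by omega) (by omega)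
      have hEdge : E (x (k - 1 - (n + 1))) (x (k - 1 - n)) := by
        rw [← hm1]; exact hstep _ (by omega)
      have e : w (GVert.fwd ⟨x (k - 1 - (n + 1)), hm⟩) (GVert.fwd ⟨x (k - 1 - n), hne'⟩)
          = if E (x (k - 1 - (n + 1))) (x (k - 1 - n)) then 1 else ⊤ := rfl
      calc netDist w (GVert.fwd ⟨x (k - 1 - (n + 1)), hm⟩) (GVert.vT ⟨a, ha⟩)
          ≤ w (GVert.fwd ⟨x (k - 1 - (n + 1)), hm⟩) (GVert.fwd ⟨x (k - 1 - n), hne'⟩)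
            + netDist w (GVert.fwd ⟨x (k - 1 - n), hne'⟩) (GVert.vT ⟨a, ha⟩) :=
          netDist_le_cons _ _ _ _
        _ ≤ 1 + ((3 * t + 1 + n : ℕ) : ℝ≥0∞) :=
          add_le_add (le_of_eq (by rw [e, if_pos hEdge])) (ih (by omega) hne')
        _ = ((3 * t + 1 + (n + 1) : ℕ) : ℝ≥0∞) := by push_cast; ring
  -- backward walk
  have bwdClaim : ∀ m, 1 ≤ m → m ≤ k - 1 → ∀ (hm : part (x m) ≠ 0),
      netDist w (GVert.bwd ⟨x m, hm⟩) (GVert.vS ⟨a, ha⟩) ≤ ((m : ℕ) : ℝ≥0∞) := by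
    intro m
    induction m with
    | zero => omega
    | succ n ih =>
      intro _ h2 hm
      by_cases hn : n = 0
      · subst hn
        have e : w (GVert.bwd ⟨x 1, hm⟩) (GVert.vS ⟨a, ha⟩)
            = if E a (x 1) then 1 else ⊤ := rfl
        refine le_trans (netDist_le_weight w _ _) ?_
        rw [e, if_pos hEa]
        simp
      · have hm' : part (x n) ≠ 0 := hne n (by omega) (by omega)
        have hEdge : E (x n) (x (n + 1)) := hstep n (by omega)
        have e : w (GVert.bwd ⟨x (n + 1), hm⟩) (GVert.bwd ⟨x n, hm'⟩)
            = if E (x n) (x (n + 1)) then 1 else ⊤ := rfl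
        calc netDist w (GVert.bwd ⟨x (n + 1), hm⟩) (GVert.vS ⟨a, ha⟩)
            ≤ w (GVert.bwd ⟨x (n + 1), hm⟩) (GVert.bwd ⟨x n, hm'⟩)
              + netDist w (GVert.bwd ⟨x n, hm'⟩) (GVert.vS ⟨a, ha⟩) :=
            netDist_le_cons _ _ _ _
          _ ≤ 1 + ((n : ℕ) : ℝ≥0∞) :=
            add_le_add (le_of_eq (by rw [e, if_pos hEdge])) (ih (by omega) (by omega) hm')
          _ = ((n + 1 : ℕ) : ℝ≥0∞) := by push_cast; ring
  -- S → T distance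
  have dST : netDist w (GVert.vS ⟨a, ha⟩) (GVert.vT ⟨a, ha⟩) ≤ ((6 * t + k : ℕ) : ℝ≥0∞) := by
    have h1eq : k - 1 - (k - 2) = 1 := by omega
    have f1 := fwdClaim (k - 2) le_rfl
    rw [h1eq] at f1
    have e : w (GVert.vS ⟨a, ha⟩) (GVert.fwd ⟨x 1, hne1⟩)
        = if E a (x 1) then ((3 * t + 1 : ℕ) : ℝ≥0∞) else ⊤ := rfl
    calc netDist w (GVert.vS ⟨a, ha⟩) (GVert.vT ⟨a, ha⟩)
        ≤ w (GVert.vS ⟨a, ha⟩) (GVert.fwd ⟨x 1, hne1⟩)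
          + netDist w (GVert.fwd ⟨x 1, hne1⟩) (GVert.vT ⟨a, ha⟩) := netDist_le_cons _ _ _ _
      _ ≤ ((3 * t + 1 : ℕ) : ℝ≥0∞) + ((3 * t + 1 + (k - 2) : ℕ) : ℝ≥0∞) :=
        add_le_add (le_of_eq (by rw [e, if_pos hEa])) (f1 hne1)
      _ = ((6 * t + k : ℕ) : ℝ≥0∞) := by rw [← Nat.cast_add]; congr 1; omega
  -- T → S distance
  have dTS : netDist w (GVert.vT ⟨a, ha⟩) (GVert.vS ⟨a, ha⟩) ≤ ((k : ℕ) : ℝ≥0∞) := by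
    have e : w (GVert.vT ⟨a, ha⟩) (GVert.bwd ⟨x (k - 1), hnek⟩)
        = if E (x (k - 1)) a then 1 else ⊤ := rfl
    calc netDist w (GVert.vT ⟨a, ha⟩) (GVert.vS ⟨a, ha⟩)
        ≤ w (GVert.vT ⟨a, ha⟩) (GVert.bwd ⟨x (k - 1), hnek⟩)
          + netDist w (GVert.bwd ⟨x (k - 1), hnek⟩) (GVert.vS ⟨a, ha⟩) := netDist_le_cons _ _ _ _
      _ ≤ 1 + ((k - 1 : ℕ) : ℝ≥0∞) :=
        add_le_add (le_of_eq (by rw [e, if_pos hlast])) (bwdClaim (k - 1) (by omega) le_rfl hnek)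
      _ = ((k : ℕ) : ℝ≥0∞) := by
        rw [show (1 : ℝ≥0∞) = ((1 : ℕ) : ℝ≥0∞) by simp, ← Nat.cast_add]
        congr 1; omega
  calc netDist w (GVert.vS ⟨a, ha⟩) (GVert.vT ⟨a, ha⟩)
      + netDist w (GVert.vT ⟨a, ha⟩) (GVert.vS ⟨a, ha⟩)
      ≤ ((6 * t + k : ℕ) : ℝ≥0∞) + ((k : ℕ) : ℝ≥0∞) := add_le_add dST dTS
    _ = ((6 * t + 2 * k : ℕ) : ℝ≥0∞) := by rw [← Nat.cast_add]; congr 1; omega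
end

section
/- In the graph G′ constructed below: for any pair of distinct nodes a, b ∈ V_1, the copies a, b ∈ S satisfy rtd(a, b) ≤ 6t + 4, and the copies a′, b′ ∈ T satisfy rtd(a′, b′) ≤ 6t + 4. -/
open scoped ENNReal

theorem netDist_le_walk {V : Type*} (w : V → V → ℝ≥0∞) (u v : V) (l : List V)
    (h : (u :: l).getLast (List.cons_ne_nil u l) = v) :
    netDist w u v ≤ walkWeight w u l :=
  iInf₂_le l h

theorem gw_vS_gj {A : Type} (k : ℕ) (part : A → ZMod k) (E : A → A → Prop) (d t : ℕ)
    (ident : A → Fin d → Bool) (a : {a : A // part a = 0}) (i : Fin d) :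
    gw k part E d t ident (GVert.vS a) (GVert.gj i)
      = if ident a.1 i then ((3 * t + 1 : ℕ) : ℝ≥0∞) else ((5 * t + 1 : ℕ) : ℝ≥0∞) := rfl

theorem gw_gj_vS {A : Type} (k : ℕ) (part : A → ZMod k) (E : A → A → Prop) (d t : ℕ)
    (ident : A → Fin d → Bool) (a : {a : A // part a = 0}) (i : Fin d) :
    gw k part E d t ident (GVert.gj i) (GVert.vS a)
      = if ident a.1 i then ((2 * t + 1 : ℕ) : ℝ≥0∞) else 1 := rfl

theorem gw_vT_gj {A : Type} (k : ℕ) (part : A → ZMod k) (E : A → A → Prop) (d t : ℕ)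
    (ident : A → Fin d → Bool) (a : {a : A // part a = 0}) (i : Fin d) :
    gw k part E d t ident (GVert.vT a) (GVert.gj i)
      = if ident a.1 i then 1 else ((2 * t + 1 : ℕ) : ℝ≥0∞) := rfl

theorem gw_gj_vT {A : Type} (k : ℕ) (part : A → ZMod k) (E : A → A → Prop) (d t : ℕ)
    (ident : A → Fin d → Bool) (a : {a : A // part a = 0}) (i : Fin d) :
    gw k part E d t ident (GVert.gj i) (GVert.vT a)
      = if ident a.1 i then ((5 * t + 1 : ℕ) : ℝ≥0∞) else ((3 * t + 1 : ℕ) : ℝ≥0∞) := rfl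

/-- For distinct `a, b ∈ V₁`, the copies `a, b ∈ S` have roundtrip
distance at most `6t + 4` in `G′`, and so do the copies `a′, b′ ∈ T`. -/
theorem stmt_13 {A : Type} (k t : ℕ) (hk : 3 ≤ k) (ht : 2 * k < t)
    (part : A → ZMod k) (E : A → A → Prop)
    (hE : ∀ u v : A, E u v → part v = part u + 1)
    (d : ℕ) (ident : A → Fin d → Bool)
    (hid₁ : ∀ a b : A, part a = 0 → part b = 0 → a ≠ b →
      (∃ i : Fin d, ident a i = true ∧ ident b i = false) ∧
      (∃ j : Fin d, ident a j = false ∧ ident b j = true))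
    (hid₂ : ∀ a b : A, part a = 0 → part b = 0 →
      (∃ i : Fin d, ident a i = true ∧ ident b i = true) ∧
      (∃ j : Fin d, ident a j = false ∧ ident b j = false))
    (a b : A) (ha : part a = 0) (hb : part b = 0) (hab : a ≠ b) :
    (netDist (gw k part E d t ident) (GVert.vS ⟨a, ha⟩) (GVert.vS ⟨b, hb⟩) +
        netDist (gw k part E d t ident) (GVert.vS ⟨b, hb⟩) (GVert.vS ⟨a, ha⟩) ≤
      ((6 * t + 4 : ℕ) : ℝ≥0∞)) ∧
    (netDist (gw k part E d t ident) (GVert.vT ⟨a, ha⟩) (GVert.vT ⟨b, hb⟩) +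
        netDist (gw k part E d t ident) (GVert.vT ⟨b, hb⟩) (GVert.vT ⟨a, ha⟩) ≤
      ((6 * t + 4 : ℕ) : ℝ≥0∞)) := by
  obtain ⟨⟨i, hai, hbi⟩, ⟨j, haj, hbj⟩⟩ := hid₁ a b ha hb hab
  set w := gw k part E d t ident with hw
  have hbound : ((3 * t + 2 : ℕ) : ℝ≥0∞) + ((3 * t + 2 : ℕ) : ℝ≥0∞)
      ≤ ((6 * t + 4 : ℕ) : ℝ≥0∞) := by
    norm_cast
    omega
  have key : ∀ (u m v : GVert {a : A // part a = 0} {x : A // part x ≠ 0} d),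
      w u m + (w m v + 0) ≤ ((3 * t + 2 : ℕ) : ℝ≥0∞) →
      netDist w u v ≤ ((3 * t + 2 : ℕ) : ℝ≥0∞) := by
    intro u m v h
    refine le_trans (netDist_le_walk w u v [m, v] rfl) ?_
    simpa [walkWeight] using h
  constructor
  · have h1 : netDist w (GVert.vS ⟨a, ha⟩) (GVert.vS ⟨b, hb⟩)
        ≤ ((3 * t + 2 : ℕ) : ℝ≥0∞) := by
      refine key _ (GVert.gj i) _ ?_
      rw [hw, gw_vS_gj, gw_gj_vS, hai, hbi]
      simp only [Bool.false_eq_true, if_true, if_false]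
      norm_cast
    have h2 : netDist w (GVert.vS ⟨b, hb⟩) (GVert.vS ⟨a, ha⟩)
        ≤ ((3 * t + 2 : ℕ) : ℝ≥0∞) := by
      refine key _ (GVert.gj j) _ ?_
      rw [hw, gw_vS_gj, gw_gj_vS, haj, hbj]
      simp only [Bool.false_eq_true, if_true, if_false]
      norm_cast
    exact le_trans (add_le_add h1 h2) hbound
  · have h1 : netDist w (GVert.vT ⟨a, ha⟩) (GVert.vT ⟨b, hb⟩)
        ≤ ((3 * t + 2 : ℕ) : ℝ≥0∞) := by
      refine key _ (GVert.gj i) _ ?_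
      rw [hw, gw_vT_gj, gw_gj_vT, hai, hbi]
      simp only [Bool.false_eq_true, if_true, if_false]
      norm_cast
      omega
    have h2 : netDist w (GVert.vT ⟨b, hb⟩) (GVert.vT ⟨a, ha⟩)
        ≤ ((3 * t + 2 : ℕ) : ℝ≥0∞) := by
      refine key _ (GVert.gj j) _ ?_
      rw [hw, gw_vT_gj, gw_gj_vT, haj, hbj]
      simp only [Bool.false_eq_true, if_true, if_false]
      norm_cast
      omega
    exact le_trans (add_le_add h1 h2) hbound
end

section
/- In the graph G′ constructed below: if a node a ∈ V_1 does not lie on a k-cycle in G, then d(a′, a) ≥ 2t, where a ∈ S and a′ ∈ T are the two copies of a in G′; that is, every directed path in G′ from a′ to a has total weight at least 2t. -/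
/-!
A potential argument. We give a potential `φ : V(G′) → ℕ` with `φ u ≤ w(u, v) + φ v` on every
edge, `φ a′ = 2t` and `φ a = 0`; telescoping along any path from `a′` to `a` bounds its weight
below by `2t`. The delicate vertices are the backward copies: `x^bwd` gets `2t − m` when `G` has
a walk of exactly `m = k − i` edges from `x ∈ V_{i+1}` to `a`, and `0` otherwise. Entering the
backward copy from `a′` costs `1` and lands at potential `2t − 1`, every backward edge lowers the
potential by at most `1`, and an edge `x^bwd → a` leaving positive potential would close a
`k`-cycle through `a`.
-/

open scoped ENNReal

namespace ZMod

variable {n : ℕ} [NeZero n] {x : ZMod n}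

theorem val_add_one_of_add_one_ne_zero (h : x + 1 ≠ 0) : (x + 1).val = x.val + 1 := by
  have hx : x + 1 = ((x.val + 1 : ℕ) : ZMod n) := by push_cast; rw [natCast_zmod_val]
  rcases (Nat.add_one_le_of_lt x.val_lt).lt_or_eq with hlt | heq
  · rw [hx, val_natCast_of_lt hlt]
  · rw [hx, heq, natCast_self] at h
    exact absurd rfl h

theorem val_eq_sub_one_of_add_one_eq_zero (h : x + 1 = 0) : x.val = n - 1 := by
  obtain ⟨m, rfl⟩ := Nat.exists_eq_succ_of_ne_zero (NeZero.ne n)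
  rw [eq_neg_of_add_eq_zero_left h, val_neg_one, Nat.succ_sub_one]

end ZMod

section Walks

variable {A : Type} (E : A → A → Prop)

def ReachesIn (n : ℕ) (x a : A) : Prop :=
  ∃ w : ℕ → A, w 0 = x ∧ (∀ i < n, E (w i) (w (i + 1))) ∧ w n = a

variable {E}

theorem reachesIn_one {x a : A} (h : E x a) : ReachesIn E 1 x a :=
  ⟨fun i => if i = 0 then x else a, rfl, by simpa using h, rfl⟩

theorem ReachesIn.head {n : ℕ} {x y a : A} (hyx : E y x) (hx : ReachesIn E n x a) :
    ReachesIn E (n + 1) y a := by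
  obtain ⟨w, hw0, hwE, hwn⟩ := hx
  refine ⟨fun i => Nat.casesOn i y w, rfl, ?_, hwn⟩
  rintro (_ | i) hi
  · simpa [hw0] using hyx
  · exact hwE i (by omega)

theorem liesOnKCycle_of_reachesIn {k : ℕ} {a : A} (hk : 1 ≤ k) (h : ReachesIn E k a a) :
    liesOnKCycle E k a := by
  obtain ⟨w, hw0, hwE, hwk⟩ := h
  refine ⟨w, hw0, fun i hi => hwE i (by omega), ?_⟩
  simpa [Nat.sub_add_cancel hk, hwk] using hwE (k - 1) (by omega)

end Walks

theorem le_netDist_add_of_potential {V : Type*} {w : V → V → ℝ≥0∞} {f : V → ℝ≥0∞}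
    (hf : ∀ u v, f u ≤ w u v + f v) (u v : V) : f u ≤ netDist w u v + f v := by
  suffices h : ∀ (l : List V) (u : V), f u ≤ walkWeight w u l + f ((u :: l).getLast (by simp)) by
    simp only [netDist, ENNReal.iInf_add]
    exact le_iInf₂ fun l hl => hl ▸ h l u
  intro l
  induction l with
  | nil => intro u; simp [walkWeight]
  | cons x xs ih =>
    intro u
    calc f u ≤ w u x + f x := hf u x
      _ ≤ w u x + (walkWeight w x xs + f ((x :: xs).getLast (by simp))) := by gcongr; exact ih x
      _ = walkWeight w u (x :: xs) + f ((u :: x :: xs).getLast (by simp)) := by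
        rw [walkWeight, add_assoc, List.getLast_cons (List.cons_ne_nil x xs)]

section Potential

variable {A : Type} {k : ℕ} (part : A → ZMod k) (E : A → A → Prop) (t : ℕ) (a : A)

open Classical in
noncomputable def bwdPotential (x : A) : ℕ :=
  if ReachesIn E (k - (part x).val) x a then 2 * t - (k - (part x).val) else 0

open Classical in
noncomputable def potential {d : ℕ} (ident : A → Fin d → Bool) :
    GVert {b : A // part b = 0} {x : A // part x ≠ 0} d → ℕ
  | .vS b => if b.1 = a then 0 else 2 * t
  | .vT b => if b.1 = a then 2 * t else 0
  | .fwd _ => t - 2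
  | .bwd x => bwdPotential part E t a x.1
  | .gj j => if ident a j then 2 * t - 1 else 0
  | .o1 => t - 1
  | .o2 => t - 3
  | .o3 => 0
  | .o4 => 2 * t - 2

variable {part E t a} [NeZero k]

theorem bwdPotential_le (x : A) : bwdPotential part E t a x ≤ 2 * t - 1 := by
  have := (part x).val_lt
  unfold bwdPotential
  split_ifs <;> omega

theorem bwdPotential_of_edge_to (hE : ∀ u v, E u v → part v = part u + 1) (ha : part a = 0)
    {x : A} (h : E x a) : bwdPotential part E t a x = 2 * t - 1 := by
  have hx : (part x).val = k - 1 :=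
    ZMod.val_eq_sub_one_of_add_one_eq_zero (by rw [← hE _ _ h, ha])
  rw [bwdPotential, hx, Nat.sub_sub_self NeZero.one_le, if_pos (reachesIn_one h)]

theorem bwdPotential_le_of_edge (hE : ∀ u v, E u v → part v = part u + 1) (hkt : k ≤ 2 * t)
    {x y : A} (hx : part x ≠ 0) (h : E y x) :
    bwdPotential part E t a x ≤ bwdPotential part E t a y + 1 := by
  have hval : (part x).val = (part y).val + 1 := by
    rw [hE _ _ h] at hx ⊢
    exact ZMod.val_add_one_of_add_one_ne_zero hx
  have := (part x).val_lt
  unfold bwdPotential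
  split_ifs with hrx hry
  · omega
  · exact absurd (by convert hrx.head h using 1; omega) hry
  · omega
  · omega

theorem bwdPotential_of_edge_from (hE : ∀ u v, E u v → part v = part u + 1) (ha : part a = 0)
    (hno : ¬ liesOnKCycle E k a) {x : A} (hx : part x ≠ 0) (h : E a x) :
    bwdPotential part E t a x = 0 := by
  have hval : (part x).val = 1 := by
    rw [hE _ _ h, ha] at hx ⊢
    rw [ZMod.val_add_one_of_add_one_ne_zero hx, ZMod.val_zero]
  refine if_neg fun hr => hno (liesOnKCycle_of_reachesIn NeZero.one_le ?_)
  convert hr.head h using 1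
  have := (part x).val_lt
  omega

theorem potential_le_gw_add {d : ℕ} (ident : A → Fin d → Bool) (ht : 2 * k < t)
    (hE : ∀ u v, E u v → part v = part u + 1) (ha : part a = 0)
    (hno : ¬ liesOnKCycle E k a) (u v : GVert {b : A // part b = 0} {x : A // part x ≠ 0} d) :
    (potential part E t a ident u : ℝ≥0∞) ≤
      gw k part E d t ident u v + potential part E t a ident v := by
  rcases u with ⟨b, hb⟩ | ⟨b, hb⟩ | ⟨x, hx⟩ | ⟨x, hx⟩ | j | _ | _ | _ | _ <;>
    rcases v with ⟨c, hc⟩ | ⟨c, hc⟩ | ⟨y, hy⟩ | ⟨y, hy⟩ | i | _ | _ | _ | _ <;>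
    simp only [gw, potential] <;>
    (try split_ifs) <;> (try subst_vars) <;> (try simp only [top_add, le_top]) <;>
    norm_cast <;> try omega
  -- the edges `a′ → y^bwd`, `x^bwd → a`, `x^bwd → c` with `c ≠ a`, `x^bwd → y^bwd`, `x^bwd → o₄`
  · have := bwdPotential_of_edge_to (t := t) hE ha ‹_›
    omega
  · have := bwdPotential_of_edge_from (t := t) hE ha hno hx ‹_›
    omega
  · have := bwdPotential_le (part := part) (E := E) (t := t) (a := a) x
    omega
  · have := bwdPotential_le_of_edge (t := t) (a := a) hE (by omega) hx ‹_›
    omega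
  · have := bwdPotential_le (part := part) (E := E) (t := t) (a := a) x
    omega

end Potential

theorem stmt_16_general {A : Type} (k t : ℕ) (hk : 3 ≤ k) (ht : 2 * k < t)
    (part : A → ZMod k) (E : A → A → Prop)
    (hE : ∀ u v : A, E u v → part v = part u + 1)
    (d : ℕ) (ident : A → Fin d → Bool)
    (a : A) (ha : part a = 0) (hno : ¬ liesOnKCycle E k a) :
    ((2 * t : ℕ) : ℝ≥0∞) ≤
      netDist (gw k part E d t ident) (GVert.vT ⟨a, ha⟩) (GVert.vS ⟨a, ha⟩) := by
  have : NeZero k := ⟨by omega⟩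
  simpa [potential] using le_netDist_add_of_potential
    (potential_le_gw_add ident ht hE ha hno) (GVert.vT ⟨a, ha⟩) (GVert.vS ⟨a, ha⟩)

/-- If `a ∈ V₁` does not lie on a `k`-cycle of `G`, then
`d(a′, a) ≥ 2t` in `G′`, i.e. every directed path from the copy `a′ ∈ T` to the copy
`a ∈ S` has total weight at least `2t`. -/
theorem stmt_16 {A : Type} (k t : ℕ) (hk : 3 ≤ k) (ht : 2 * k < t)
    (part : A → ZMod k) (E : A → A → Prop)
    (hE : ∀ u v : A, E u v → part v = part u + 1)
    (d : ℕ) (ident : A → Fin d → Bool)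
    (hid₁ : ∀ a b : A, part a = 0 → part b = 0 → a ≠ b →
      (∃ i : Fin d, ident a i = true ∧ ident b i = false) ∧
      (∃ j : Fin d, ident a j = false ∧ ident b j = true))
    (hid₂ : ∀ a b : A, part a = 0 → part b = 0 →
      (∃ i : Fin d, ident a i = true ∧ ident b i = true) ∧
      (∃ j : Fin d, ident a j = false ∧ ident b j = false))
    (a : A) (ha : part a = 0) (hno : ¬ liesOnKCycle E k a) :
    ((2 * t : ℕ) : ℝ≥0∞) ≤
      netDist (gw k part E d t ident) (GVert.vT ⟨a, ha⟩) (GVert.vS ⟨a, ha⟩) :=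
  stmt_16_general k t hk ht part E hE d ident a ha hno
end
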